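/- arXiv:1904.01998 — 2 statements merged into one kernel-verified Lean document; each statement's English description precedes it below -/
import Mathlib

section
/- Let Σ ⊂ ℝ^{n−1} be a bounded rectangle, ε > 0, Ω_ε^M := Σ × (−ε, ε), and let φ : Σ × [−ε, ε] → ℝ be continuously differentiable. Define the average φ̄(x̄) := (1/(2ε)) ∫_{−ε}^{ε} φ(x̄, x_n) dx_n. Then for the trace on the upper boundary it holds that ‖φ(·, ε) − φ̄‖_{L²(Σ)} ≤ C √ε ‖∂_n φ‖_{L²(Ω_ε^M)} for a constant C > 0 independent of ε and φ. -/
/-!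
By the fundamental theorem of calculus, `|φ(x̄, ε) - φ(x̄, t)| ≤ ∫_{-ε}^{ε} |∂ₙφ(x̄, ·)|` for
every `t ∈ [-ε, ε]`, so the same bound holds for `φ(x̄, ε) - φ̄(x̄)`. Cauchy–Schwarz (Jensen's
inequality for the square) turns it into `|φ(x̄, ε) - φ̄(x̄)|² ≤ 2ε ∫_{-ε}^{ε} |∂ₙφ(x̄, ·)|²`, and
integrating over `Σ` gives the estimate with `C = √2`.
-/

open MeasureTheory Set

theorem sq_integral_le_measureReal_univ_mul_integral_sq {α : Type*} [MeasurableSpace α]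
    {μ : Measure α} [IsFiniteMeasure μ] {f : α → ℝ} (hf : Integrable f μ)
    (hf2 : Integrable (fun x => f x ^ 2) μ) :
    (∫ x, f x ∂μ) ^ 2 ≤ μ.real univ * ∫ x, f x ^ 2 ∂μ := by
  rcases eq_zero_or_neZero μ with rfl | _
  · simp
  have jensen := (even_two.convexOn_pow (𝕜 := ℝ)).map_average_le (continuousOn_pow 2)
    isClosed_univ (ae_of_all μ fun x => mem_univ (f x)) hf hf2
  have hμ : 0 < μ.real univ := measureReal_univ_pos
  rw [average_eq, average_eq, smul_eq_mul, smul_eq_mul, mul_pow, inv_pow,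
    inv_mul_le_iff₀ (by positivity)] at jensen
  calc _ ≤ _ := jensen
    _ = μ.real univ * ∫ x, f x ^ 2 ∂μ := by field_simp

theorem abs_sub_le_integral_abs_deriv {g : ℝ → ℝ} (hg : ContDiff ℝ 1 g) {a b t : ℝ}
    (ht : t ∈ Icc a b) : |g b - g t| ≤ ∫ s in a..b, |deriv g s| := by
  have hg' : Continuous (deriv g) := hg.continuous_deriv le_rfl
  rw [← intervalIntegral.integral_deriv_eq_sub (fun s _ => hg.differentiable one_ne_zero s)
    (hg'.intervalIntegrable t b)]
  calc |∫ s in t..b, deriv g s| ≤ ∫ s in t..b, |deriv g s| :=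
        intervalIntegral.abs_integral_le_integral_abs ht.2
    _ ≤ ∫ s in a..b, |deriv g s| :=
        intervalIntegral.integral_mono_interval ht.1 ht.2 le_rfl
          (.of_forall fun s => abs_nonneg _) (hg'.abs.intervalIntegrable a b)

theorem abs_sub_setAverage_le_integral_abs_deriv {g : ℝ → ℝ} (hg : ContDiff ℝ 1 g) {a b : ℝ}
    (hab : a < b) : |g b - ⨍ t in Ioo a b, g t| ≤ ∫ s in a..b, |deriv g s| := by
  have hvol : volume.real (Ioo a b) = b - a := Real.volume_real_Ioo_of_le hab.le
  have hfin : volume (Ioo a b) < ⊤ := measure_Ioo_lt_top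
  have hgi : IntegrableOn g (Ioo a b) :=
    (hg.continuous.integrableOn_Icc (a := a) (b := b)).mono_set Ioo_subset_Icc_self
  have hdiff : g b - ⨍ t in Ioo a b, g t = (b - a)⁻¹ * ∫ t in Ioo a b, (g b - g t) := by
    rw [setAverage_eq, hvol, smul_eq_mul,
      integral_sub (integrableOn_const (C := g b) hfin.ne (by simp)) hgi, setIntegral_const, hvol,
      smul_eq_mul]
    field_simp [(sub_pos.2 hab).ne']
  have hbound := norm_setIntegral_le_of_norm_le_const hfin
    fun t ht => (Real.norm_eq_abs _).trans_le
      (abs_sub_le_integral_abs_deriv hg (Ioo_subset_Icc_self ht))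
  rw [hdiff, abs_mul, abs_inv, abs_of_pos (sub_pos.2 hab), inv_mul_le_iff₀ (sub_pos.2 hab),
    mul_comm]
  simpa [hvol] using hbound

theorem sq_sub_setAverage_le {g : ℝ → ℝ} (hg : ContDiff ℝ 1 g) {a b : ℝ} (hab : a < b) :
    (g b - ⨍ t in Ioo a b, g t) ^ 2 ≤ (b - a) * ∫ t in Ioo a b, deriv g t ^ 2 := by
  have hg' : Continuous (deriv g) := hg.continuous_deriv le_rfl
  have hint : ∀ h : ℝ → ℝ, Continuous h → Integrable h (volume.restrict (Ioo a b)) :=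
    fun h hh => (hh.integrableOn_Icc (a := a) (b := b)).mono_set Ioo_subset_Icc_self
  have hcs := sq_integral_le_measureReal_univ_mul_integral_sq (μ := volume.restrict (Ioo a b))
    (hint _ hg'.abs) (hint _ (hg'.abs.pow 2))
  simp only [measureReal_restrict_apply_univ, Real.volume_real_Ioo_of_le hab.le, sq_abs] at hcs
  calc (g b - ⨍ t in Ioo a b, g t) ^ 2 = |g b - ⨍ t in Ioo a b, g t| ^ 2 := (sq_abs _).symm
    _ ≤ (∫ t in Ioo a b, |deriv g t|) ^ 2 := by
        gcongr
        rw [← integral_Ioc_eq_integral_Ioo, ← intervalIntegral.integral_of_le hab.le]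
        exact abs_sub_setAverage_le_integral_abs_deriv hg hab
    _ ≤ (b - a) * ∫ t in Ioo a b, deriv g t ^ 2 := hcs

theorem continuous_deriv_of_contDiff_uncurry {E : Type*} [NormedAddCommGroup E]
    [NormedSpace ℝ E] {φ : E → ℝ → ℝ} (hφ : ContDiff ℝ 1 (fun p : E × ℝ => φ p.1 p.2)) :
    Continuous fun p : E × ℝ => deriv (φ p.1) p.2 := by
  have hslice (p : E × ℝ) :
      HasDerivAt (φ p.1) (fderiv ℝ (fun p : E × ℝ => φ p.1 p.2) p (0, 1)) p.2 := by
    have hpath : HasDerivAt (fun t : ℝ => (p.1, t)) (0, 1) p.2 :=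
      (hasDerivAt_const p.2 p.1).prodMk (hasDerivAt_id p.2)
    exact (hφ.differentiable one_ne_zero p).hasFDerivAt.comp_hasDerivAt p.2 hpath
  simp only [fun p => (hslice p).deriv]
  exact (hφ.continuous_fderiv one_ne_zero).clm_apply continuous_const

theorem integrableOn_setIntegral_of_continuous {X Y : Type*} [MetricSpace X] [ProperSpace X]
    [MeasurableSpace X] [OpensMeasurableSpace X] [MetricSpace Y] [ProperSpace Y]
    [MeasurableSpace Y] [OpensMeasurableSpace Y] {μ : Measure X} {ν : Measure Y}
    [IsFiniteMeasureOnCompacts μ] [IsFiniteMeasureOnCompacts ν] [SFinite ν] {F : X × Y → ℝ}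
    (hF : Continuous F) {s : Set X} {t : Set Y} (hs : Bornology.IsBounded s) (ht : Bornology.IsBounded t) :
    IntegrableOn (fun x => ∫ y in t, F (x, y) ∂ν) s μ := by
  have hK := (hF.continuousOn.integrableOn_compact (μ := μ.prod ν)
    (hs.isCompact_closure.prod ht.isCompact_closure)).mono_set
    (prod_mono subset_closure subset_closure)
  rw [IntegrableOn, ← Measure.prod_restrict] at hK
  exact hK.integral_prod_left

theorem stmt_4_general (m : ℕ) (l : Fin m → ℝ) :
    ∃ C > 0, ∀ (ε : ℝ), 0 < ε → ∀ (φ : (Fin m → ℝ) → ℝ → ℝ),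
      ContDiff ℝ 1 (fun p : (Fin m → ℝ) × ℝ => φ p.1 p.2) →
      Real.sqrt (∫ x in Set.univ.pi (fun i => Set.Ioo (0 : ℝ) (l i)),
          (φ x ε - (1 / (2 * ε)) * ∫ t in Set.Ioo (-ε) ε, φ x t) ^ 2)
        ≤ C * Real.sqrt ε *
          Real.sqrt (∫ x in Set.univ.pi (fun i => Set.Ioo (0 : ℝ) (l i)),
            ∫ t in Set.Ioo (-ε) ε, (deriv (φ x) t) ^ 2) := by
  refine ⟨√2, by positivity, fun ε hε φ hφ => ?_⟩
  have hfiber (x : Fin m → ℝ) : (φ x ε - (1 / (2 * ε)) * ∫ t in Ioo (-ε) ε, φ x t) ^ 2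
      ≤ 2 * ε * ∫ t in Ioo (-ε) ε, deriv (φ x) t ^ 2 := by
    have hφx : ContDiff ℝ 1 (φ x) := hφ.comp (contDiff_const.prodMk contDiff_id)
    have := sq_sub_setAverage_le hφx (neg_lt_self hε)
    rwa [setAverage_eq, Real.volume_real_Ioo_of_le (neg_le_self hε.le), smul_eq_mul,
      sub_neg_eq_add, ← two_mul, ← one_div] at this
  have hint : IntegrableOn (fun x => ∫ t in Ioo (-ε) ε, deriv (φ x) t ^ 2)
      (univ.pi fun i => Ioo 0 (l i)) :=
    integrableOn_setIntegral_of_continuous ((continuous_deriv_of_contDiff_uncurry hφ).pow 2)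
      (Bornology.IsBounded.pi fun i => Metric.isBounded_Ioo 0 (l i)) (Metric.isBounded_Ioo _ _)
  calc _ ≤ √(∫ x in univ.pi fun i => Ioo 0 (l i),
          2 * ε * ∫ t in Ioo (-ε) ε, deriv (φ x) t ^ 2) :=
        Real.sqrt_le_sqrt (integral_mono_of_nonneg (.of_forall fun x => sq_nonneg _)
          (hint.const_mul _) (.of_forall hfiber))
    _ = _ := by rw [integral_const_mul, Real.sqrt_mul (by positivity), Real.sqrt_mul zero_le_two]

/-- Thin-layer trace estimate: for a bounded rectangle `Σ ⊂ ℝ^{n-1}` there is a constant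
`C > 0`, independent of `ε` and `φ`, such that for every `ε > 0` and every `C¹` function
`φ` on the layer, the `L²(Σ)` distance between the top trace `φ(·, ε)` and the vertical
average `φ̄` is bounded by `C √ε ‖∂ₙ φ‖_{L²(Ω_ε^M)}`. -/
theorem stmt_4 (m : ℕ) (l : Fin m → ℝ) (hl : ∀ i, 0 < l i) :
    ∃ C > 0, ∀ (ε : ℝ), 0 < ε → ∀ (φ : (Fin m → ℝ) → ℝ → ℝ),
      ContDiff ℝ 1 (fun p : (Fin m → ℝ) × ℝ => φ p.1 p.2) →
      Real.sqrt (∫ x in Set.univ.pi (fun i => Set.Ioo (0 : ℝ) (l i)),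
          (φ x ε - (1 / (2 * ε)) * ∫ t in Set.Ioo (-ε) ε, φ x t) ^ 2)
        ≤ C * Real.sqrt ε *
          Real.sqrt (∫ x in Set.univ.pi (fun i => Set.Ioo (0 : ℝ) (l i)),
            ∫ t in Set.Ioo (-ε) ε, (deriv (φ x) t) ^ 2) :=
  stmt_4_general m l
end

section
/- Let Y := (0,1)^{n−1}, Z_∞ := Y × ℝ, and let h : Z_∞ → ℝⁿ be a C¹ vector field, Y-periodic in the first n−1 variables, with ∇·h = 0 on Z_∞, and assume |h(y)| ≤ M e^{−γ|y_n|} for constants M, γ > 0. Then the function F(s) := ∫_Y h_n(ȳ, s) dȳ is constant in s ∈ ℝ, and moreover F(s) = 0 for all s ∈ ℝ. -/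
open MeasureTheory Set Filter Topology

/-!
Apply the divergence theorem to `h` on the box `[0,1]^m × [s₁, s₂]`. By lateral periodicity the
integrals over the opposite faces `y_k = 0` and `y_k = 1` cancel, and since `∇·h = 0` the flux
`F(s)` through the bottom equals the one through the top. Thus `F` is constant, and as
`|F(s)| ≤ M e^{-γ|s|} → 0`, it vanishes.
-/

theorem Fin.insertNth_add_single {n : ℕ} {β : Type*} [AddZeroClass β] (i : Fin (n + 1))
    (x c : β) (y : Fin n → β) :
    i.insertNth (α := fun _ => β) (x + c) y = i.insertNth x y + Pi.single i c := by
  simpa [Pi.add_def] using Fin.insertNth_binop (α := fun _ => β) (fun _ => (· + ·)) i x c y 0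

theorem integral_snoc_last_eq_of_periodic_of_divergence_eq_zero {n : ℕ}
    {F : (Fin (n + 1) → ℝ) → Fin (n + 1) → ℝ} (hF : Differentiable ℝ F)
    (hdiv : ∀ x, ∑ i, fderiv ℝ F x (Pi.single i 1) i = 0)
    (hper : ∀ x (k : Fin n), F (x + Pi.single k.castSucc 1) = F x) (s₁ s₂ : ℝ) :
    ∫ y in Icc (0 : Fin n → ℝ) 1, F (Fin.snoc y s₁) (Fin.last n) =
      ∫ y in Icc (0 : Fin n → ℝ) 1, F (Fin.snoc y s₂) (Fin.last n) := by
  wlog hs : s₁ ≤ s₂ generalizing s₁ s₂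
  · exact (this s₂ s₁ (le_of_not_ge hs)).symm
  have hle : (Fin.snoc 0 s₁ : Fin (n + 1) → ℝ) ≤ Fin.snoc 1 s₂ := by
    intro i
    refine Fin.lastCases ?_ (fun j => ?_) i <;> simp [hs]
  have key := integral_divergence_of_hasFDerivAt_off_countable _ _ hle F (fderiv ℝ F) ∅
    countable_empty hF.continuous.continuousOn (fun x _ => (hF x).hasFDerivAt)
    (by simp only [hdiv]; exact integrableOn_zero)
  have hlateral : ∀ (k : Fin n) (y : Fin n → ℝ),
      F (k.castSucc.insertNth 1 y) k.castSucc = F (k.castSucc.insertNth 0 y) k.castSucc := by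
    intro k y
    rw [← zero_add (1 : ℝ), Fin.insertNth_add_single, hper]
  simp only [hdiv, integral_zero, Fin.sum_univ_castSucc, Fin.snoc_castSucc, Fin.snoc_last,
    Pi.zero_apply, Pi.one_apply, hlateral, sub_self, Finset.sum_const_zero, zero_add,
    Fin.succAbove_last, Fin.snoc_comp_castSucc, Fin.insertNth_last'] at key
  linarith

noncomputable def Fin.snocCLE (n : ℕ) : ((Fin n → ℝ) × ℝ) ≃L[ℝ] (Fin (n + 1) → ℝ) :=
  LinearEquiv.toContinuousLinearEquiv
    { toFun := fun p => Fin.snoc p.1 p.2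
      invFun := fun x => (Fin.init x, x (Fin.last n))
      map_add' := fun p q => by
        ext i
        refine Fin.lastCases ?_ (fun j => ?_) i <;> simp
      map_smul' := fun c p => by
        ext i
        refine Fin.lastCases ?_ (fun j => ?_) i <;> simp
      left_inv := fun p => by simp
      right_inv := Fin.snoc_init_self }

namespace Fin

variable {n : ℕ}

@[simp]
theorem snocCLE_apply (p : (Fin n → ℝ) × ℝ) : snocCLE n p = snoc p.1 p.2 := rfl

theorem snocCLE_symm_apply (x : Fin (n + 1) → ℝ) :
    (snocCLE n).symm x = (init x, x (last n)) := rfl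

@[simp]
theorem snocCLE_symm_snoc (y : Fin n → ℝ) (t : ℝ) : (snocCLE n).symm (snoc y t) = (y, t) := by
  simp [snocCLE_symm_apply]

theorem snocCLE_symm_single_castSucc (k : Fin n) :
    (snocCLE n).symm (Pi.single k.castSucc 1) = (Pi.single k 1, 0) := by
  ext j
  · simp [snocCLE_symm_apply, init, Pi.single_apply]
  · simp [snocCLE_symm_apply, (castSucc_lt_last k).ne']

theorem snocCLE_symm_single_last :
    (snocCLE n).symm (Pi.single (last n) 1) = (0, 1) := by
  ext j
  · simp [snocCLE_symm_apply, init, (castSucc_lt_last j).ne]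
  · simp [snocCLE_symm_apply]

end Fin

theorem integral_snd_eq_of_periodic_of_divergence_eq_zero {n : ℕ}
    {h : (Fin n → ℝ) × ℝ → (Fin n → ℝ) × ℝ} (hh : Differentiable ℝ h)
    (hdiv : ∀ p, ∑ k, (fderiv ℝ h p (Pi.single k 1, 0)).1 k + (fderiv ℝ h p (0, 1)).2 = 0)
    (hper : ∀ p (k : Fin n), h (p + (Pi.single k 1, 0)) = h p) (s₁ s₂ : ℝ) :
    ∫ y in Icc (0 : Fin n → ℝ) 1, (h (y, s₁)).2 = ∫ y in Icc (0 : Fin n → ℝ) 1, (h (y, s₂)).2 := by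
  set e := Fin.snocCLE n
  have hfderiv : ∀ x, fderiv ℝ (e ∘ h ∘ e.symm) x = (e : _ →L[ℝ] _).comp
      ((fderiv ℝ h (e.symm x)).comp (e.symm : _ →L[ℝ] _)) := fun x => by
    rw [e.comp_fderiv, e.symm.comp_right_fderiv]
  simpa [e] using integral_snoc_last_eq_of_periodic_of_divergence_eq_zero (F := e ∘ h ∘ e.symm)
    (e.differentiable.comp (hh.comp e.symm.differentiable))
    (fun x => by
      simpa [e, hfderiv, Fin.sum_univ_castSucc, Fin.snocCLE_symm_single_castSucc,
        Fin.snocCLE_symm_single_last] using hdiv (e.symm x))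
    (fun x k => by
      simpa [e, Fin.snocCLE_symm_single_castSucc] using congrArg e (hper (e.symm x) k))
    s₁ s₂

theorem setIntegral_univ_pi_Ioo_eq_Icc {ι E : Type*} [Fintype ι] [NormedAddCommGroup E]
    [NormedSpace ℝ E] (g : (ι → ℝ) → E) :
    ∫ y in univ.pi fun _ => Ioo (0 : ℝ) 1, g y = ∫ y in Icc 0 1, g y := by
  rw [volume_pi]
  exact setIntegral_congr_set Measure.univ_pi_Ioo_ae_eq_Icc

theorem norm_setIntegral_Icc_zero_one_le {ι E : Type*} [Fintype ι] [NormedAddCommGroup E]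
    [NormedSpace ℝ E] {g : (ι → ℝ) → E} {C : ℝ} (hg : ∀ y, ‖g y‖ ≤ C) :
    ‖∫ y in Icc (0 : ι → ℝ) 1, g y‖ ≤ C := by
  have hvol : volume (Icc (0 : ι → ℝ) 1) = 1 := by simp [Real.volume_Icc_pi]
  simpa [measureReal_def, hvol] using
    norm_setIntegral_le_of_norm_le_const (hvol.trans_lt ENNReal.one_lt_top) fun y _ => hg y

theorem tendsto_mul_exp_neg_mul_abs_atTop (M : ℝ) {γ : ℝ} (hγ : 0 < γ) :
    Tendsto (fun s => M * Real.exp (-γ * |s|)) atTop (𝓝 0) := by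
  simpa using ((Real.tendsto_exp_atBot.comp
    (tendsto_abs_atTop_atTop.const_mul_atTop_of_neg (neg_lt_zero.2 hγ))).const_mul M)

theorem stmt_11_general (m : ℕ) (h : ((Fin m → ℝ) × ℝ) → (Fin m → ℝ) × ℝ)
    (hC1 : ContDiff ℝ 1 h)
    (hper : ∀ (p : (Fin m → ℝ) × ℝ) (k : Fin m),
      h ((fun j => p.1 j + if j = k then 1 else 0), p.2) = h p)
    (hdiv : ∀ p : (Fin m → ℝ) × ℝ,
      (∑ k : Fin m, fderiv ℝ (fun q => (h q).1 k) p ((fun j => if j = k then (1:ℝ) else 0), (0:ℝ)))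
        + fderiv ℝ (fun q => (h q).2) p ((0 : Fin m → ℝ), (1:ℝ)) = 0)
    (M γ : ℝ) (hγ : 0 < γ)
    (hdecay : ∀ p : (Fin m → ℝ) × ℝ,
      Real.sqrt ((∑ k : Fin m, (h p).1 k ^ 2) + (h p).2 ^ 2) ≤ M * Real.exp (-γ * |p.2|)) :
    (∀ s₁ s₂ : ℝ,
      (∫ y in Set.univ.pi (fun _ : Fin m => Set.Ioo (0:ℝ) 1), (h (y, s₁)).2)
        = ∫ y in Set.univ.pi (fun _ : Fin m => Set.Ioo (0:ℝ) 1), (h (y, s₂)).2) ∧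
    (∀ s : ℝ, (∫ y in Set.univ.pi (fun _ : Fin m => Set.Ioo (0:ℝ) 1), (h (y, s)).2) = 0) := by
  have hh : Differentiable ℝ h := hC1.differentiable one_ne_zero
  have hdiv' : ∀ p, ∑ k, (fderiv ℝ h p (Pi.single k 1, 0)).1 k + (fderiv ℝ h p (0, 1)).2 = 0 :=
    fun p => by
      have hsingle : ∀ k : Fin m, (fun j => if j = k then (1 : ℝ) else 0) = Pi.single k 1 :=
        fun k => funext fun j => (Pi.single_apply k 1 j).symm
      simpa [fderiv_apply, fderiv.fst, fderiv.snd, hh p, hh.fst p, hsingle] using hdiv p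
  have hper' : ∀ p (k : Fin m), h (p + (Pi.single k 1, 0)) = h p := fun p k => by
    convert hper p k using 2
    ext j <;> simp [Pi.single_apply]
  simp only [setIntegral_univ_pi_Ioo_eq_Icc]
  have hflux := integral_snd_eq_of_periodic_of_divergence_eq_zero hh hdiv' hper'
  have hbound : ∀ s, ‖∫ y in Icc (0 : Fin m → ℝ) 1, (h (y, s)).2‖ ≤ M * Real.exp (-γ * |s|) :=
    fun s => norm_setIntegral_Icc_zero_one_le fun y => (Real.abs_le_sqrt
      (le_add_of_nonneg_left (Finset.sum_nonneg fun _ _ => sq_nonneg _))).trans (hdecay (y, s))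
  refine ⟨hflux, fun s => tendsto_nhds_unique ?_
    (squeeze_zero_norm hbound (tendsto_mul_exp_neg_mul_abs_atTop M hγ))⟩
  simpa only [hflux _ s] using tendsto_const_nhds

/-- For a `C¹`, laterally `Y`-periodic, divergence-free vector field `h` on the infinite
strip `Z_∞ = Y × ℝ` (with `Y = (0,1)^{n-1}`) decaying exponentially as `|y_n| → ∞`, the
flux `F(s) = ∫_Y h_n(ȳ, s) dȳ` through each horizontal cross-section is constant in `s`,
and in fact vanishes identically. -/
theorem stmt_11 (m : ℕ) (h : ((Fin m → ℝ) × ℝ) → (Fin m → ℝ) × ℝ)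
    (hC1 : ContDiff ℝ 1 h)
    (hper : ∀ (p : (Fin m → ℝ) × ℝ) (k : Fin m),
      h ((fun j => p.1 j + if j = k then 1 else 0), p.2) = h p)
    (hdiv : ∀ p : (Fin m → ℝ) × ℝ,
      (∑ k : Fin m, fderiv ℝ (fun q => (h q).1 k) p ((fun j => if j = k then (1:ℝ) else 0), (0:ℝ)))
        + fderiv ℝ (fun q => (h q).2) p ((0 : Fin m → ℝ), (1:ℝ)) = 0)
    (M γ : ℝ) (hM : 0 < M) (hγ : 0 < γ)
    (hdecay : ∀ p : (Fin m → ℝ) × ℝ,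
      Real.sqrt ((∑ k : Fin m, (h p).1 k ^ 2) + (h p).2 ^ 2) ≤ M * Real.exp (-γ * |p.2|)) :
    (∀ s₁ s₂ : ℝ,
      (∫ y in Set.univ.pi (fun _ : Fin m => Set.Ioo (0:ℝ) 1), (h (y, s₁)).2)
        = ∫ y in Set.univ.pi (fun _ : Fin m => Set.Ioo (0:ℝ) 1), (h (y, s₂)).2) ∧
    (∀ s : ℝ, (∫ y in Set.univ.pi (fun _ : Fin m => Set.Ioo (0:ℝ) 1), (h (y, s)).2) = 0) :=
  stmt_11_general m h hC1 hper hdiv M γ hγ hdecay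
end
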